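/- Let q be a prime power and let k, n be positive integers with 2k ≤ n, and write n ≡ r (mod k) with 0 ≤ r < k. For each j = 0, …, ⌊(n−k)/k⌋, let C_j ⊆ F_q^{k×(n−k−jk)} be an MRD code with minimum rank distance k when n − jk − k ≥ k, and a single matrix otherwise; let 𝒞_j = { row space of [0_{k×jk} | I_k | M] : M ∈ C_j }, and 𝒞 = ⋃_j 𝒞_j. Then |𝒞| = (q^n − q^{r+k})/(q^k − 1) + 1. -/

import Mathlib

open Matrix Module

/-- The row space of a matrix, i.e. the span of its rows. -/
noncomputable def rowSpace (F : Type) [Field F] {k n : ℕ}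
    (M : Matrix (Fin k) (Fin n) F) : Submodule F (Fin n → F) :=
  Submodule.span F (Set.range M)

/-- The block matrix `[0_{k×l} | I_k | M]` of size `k × n`,
where `M` has size `k × (n - k - l)`. -/
def paddedLift (F : Type) [Field F] (k n l : ℕ)
    (M : Matrix (Fin k) (Fin (n - k - l)) F) : Matrix (Fin k) (Fin n) F :=
  fun i j =>
    if (j : ℕ) < l then 0
    else if h : (j : ℕ) < l + k then (if (j : ℕ) = l + (i : ℕ) then 1 else 0)
    else M i ⟨(j : ℕ) - (l + k), by have := j.isLt; omega⟩

/-- A rank-metric code `C` has minimum rank distance `d`. -/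
def HasMinRankDist (F : Type) [Field F] {m n : ℕ}
    (C : Set (Matrix (Fin m) (Fin n) F)) (d : ℕ) : Prop :=
  (∀ A ∈ C, ∀ B ∈ C, A ≠ B → d ≤ (A - B).rank) ∧
  ∃ A ∈ C, ∃ B ∈ C, A ≠ B ∧ (A - B).rank = d

/-- A rank-metric code is MRD if it has minimum rank distance `d` and attains
the Singleton-like bound. -/
def IsMRD (F : Type) [Field F] [Fintype F] {m n : ℕ}
    (C : Set (Matrix (Fin m) (Fin n) F)) (d : ℕ) : Prop :=
  HasMinRankDist F C d ∧
  Nat.card C = (Fintype.card F) ^ (max n m * (min n m - d + 1))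

/-- A constant dimension code `𝒞` of dimension `k` has minimum injection distance `d`. -/
def HasMinInjDist (F : Type) [Field F] {n : ℕ} (k : ℕ)
    (𝒞 : Set (Submodule F (Fin n → F))) (d : ℕ) : Prop :=
  (∀ U ∈ 𝒞, ∀ V ∈ 𝒞, U ≠ V → d ≤ k - finrank F ↥(U ⊓ V)) ∧
  ∃ U ∈ 𝒞, ∃ V ∈ 𝒞, U ≠ V ∧ k - finrank F ↥(U ⊓ V) = d

/-! In `[0 | I_k | M]` the identity block sits at columns `l, …, l + k - 1`, so a vector of the
row space displays its coefficient vector on these pivot columns, and it vanishes on the first `l`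
columns. Hence lifts with different offsets `l = jk` have different row spaces (a row of the
smaller offset has a `1` where the other row space is zero), and for a fixed offset a row of one
lift lying in the row space of another must be the corresponding row, so `M` is recovered. The
code is therefore a disjoint union of copies of the `C_j`; the MRD components have `q^(n-k-jk)`
elements, the last one a single element, and the sum `∑_{j < ⌊(n-k)/k⌋} q^(n-k-jk)` telescopes. -/

lemma mem_rowSpace_iff_exists_vecMul {F : Type} [Field F] {k n : ℕ}
    (A : Matrix (Fin k) (Fin n) F) (v : Fin n → F) :
    v ∈ rowSpace F A ↔ ∃ c : Fin k → F, c ᵥ* A = v := by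
  simp only [rowSpace, vecMul_eq_sum]
  exact Submodule.mem_span_range_iff_exists_fun F

lemma IsMRD.natCard_eq_of_le {F : Type} [Field F] [Fintype F] {m n : ℕ}
    {C : Set (Matrix (Fin m) (Fin n) F)} (hC : IsMRD F C m) (hmn : m ≤ n) :
    Nat.card C = Fintype.card F ^ n := by
  rw [hC.2, max_eq_left hmn, min_eq_right hmn, Nat.sub_self, zero_add, mul_one]

section paddedLift

variable {F : Type} [Field F] {k n l : ℕ}

lemma paddedLift_apply_of_lt (M : Matrix (Fin k) (Fin (n - k - l)) F) (i : Fin k) {j : Fin n}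
    (hj : (j : ℕ) < l) : paddedLift F k n l M i j = 0 := by
  simp [paddedLift, hj]

lemma paddedLift_apply_of_eq_add (M : Matrix (Fin k) (Fin (n - k - l)) F) (i t : Fin k)
    {j : Fin n} (hj : (j : ℕ) = l + t) :
    paddedLift F k n l M i j = if t = i then 1 else 0 := by
  have ht := t.isLt
  simp only [paddedLift]
  rw [if_neg (by omega), dif_pos (by omega)]
  simp only [hj, Nat.add_left_cancel_iff, Fin.val_inj]

lemma paddedLift_apply_of_eq_add_add (M : Matrix (Fin k) (Fin (n - k - l)) F) (i : Fin k)
    (s : Fin (n - k - l)) {j : Fin n} (hj : (j : ℕ) = l + k + s) :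
    paddedLift F k n l M i j = M i s := by
  simp only [paddedLift, if_neg (show ¬ (j : ℕ) < l by omega),
    dif_neg (show ¬ (j : ℕ) < l + k by omega)]
  congr
  omega

lemma vecMul_paddedLift_apply_of_lt (M : Matrix (Fin k) (Fin (n - k - l)) F) (c : Fin k → F)
    {j : Fin n} (hj : (j : ℕ) < l) : (c ᵥ* paddedLift F k n l M) j = 0 := by
  simp [vecMul, dotProduct, paddedLift_apply_of_lt M _ hj]

lemma vecMul_paddedLift_apply_of_eq_add (M : Matrix (Fin k) (Fin (n - k - l)) F) (c : Fin k → F)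
    (t : Fin k) {j : Fin n} (hj : (j : ℕ) = l + t) : (c ᵥ* paddedLift F k n l M) j = c t := by
  simp [vecMul, dotProduct, paddedLift_apply_of_eq_add M _ t hj]

lemma rowSpace_paddedLift_injective :
    Function.Injective fun M : Matrix (Fin k) (Fin (n - k - l)) F ↦
      rowSpace F (paddedLift F k n l M) := by
  intro M M' h
  ext i s
  have hs := s.isLt
  have hmem : paddedLift F k n l M' i ∈ rowSpace F (paddedLift F k n l M) := by
    rw [show rowSpace F (paddedLift F k n l M) = _ from h]
    exact Submodule.subset_span ⟨i, rfl⟩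
  obtain ⟨c, hc⟩ := (mem_rowSpace_iff_exists_vecMul _ _).1 hmem
  have hpivot : c = Pi.single i 1 := by
    ext t
    have := congrFun hc ⟨l + t, by omega⟩
    rwa [vecMul_paddedLift_apply_of_eq_add M c t rfl,
      paddedLift_apply_of_eq_add M' i t rfl, ← Pi.single_apply] at this
  have hrow : paddedLift F k n l M' i = paddedLift F k n l M i := by
    rw [← hc, hpivot, single_one_vecMul]
    rfl
  rw [← paddedLift_apply_of_eq_add_add M i s (j := ⟨l + k + s, by omega⟩) rfl, ← hrow,
    paddedLift_apply_of_eq_add_add M' i s rfl]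

lemma rowSpace_paddedLift_ne_of_lt {l' : ℕ} (hk : 0 < k) (hln : l < n) (hll' : l < l')
    (M : Matrix (Fin k) (Fin (n - k - l)) F) (M' : Matrix (Fin k) (Fin (n - k - l')) F) :
    rowSpace F (paddedLift F k n l M) ≠ rowSpace F (paddedLift F k n l' M') := by
  intro h
  have hmem : paddedLift F k n l M ⟨0, hk⟩ ∈ rowSpace F (paddedLift F k n l' M') :=
    h ▸ Submodule.subset_span ⟨⟨0, hk⟩, rfl⟩
  obtain ⟨c, hc⟩ := (mem_rowSpace_iff_exists_vecMul _ _).1 hmem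
  have := congrFun hc ⟨l, hln⟩
  rw [vecMul_paddedLift_apply_of_lt M' c hll',
    paddedLift_apply_of_eq_add M ⟨0, hk⟩ ⟨0, hk⟩ rfl, if_pos rfl] at this
  exact zero_ne_one this

end paddedLift

lemma rowSpace_paddedLift_sigma_injective {F : Type} [Field F] {k n : ℕ} {ι : Type*}
    {l : ι → ℕ} (hl : Function.Injective l) (hk : 0 < k) (hln : ∀ i, l i < n) :
    Function.Injective fun p : Σ i, Matrix (Fin k) (Fin (n - k - l i)) F ↦
      rowSpace F (paddedLift F k n (l p.1) p.2) := by
  rintro ⟨i, M⟩ ⟨i', M'⟩ h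
  obtain rfl : i = i' := by
    by_contra hii'
    rcases lt_or_gt_of_ne (hl.ne hii') with hlt | hlt
    · exact rowSpace_paddedLift_ne_of_lt hk (hln i) hlt M M' h
    · exact rowSpace_paddedLift_ne_of_lt hk (hln i') hlt M' M h.symm
  obtain rfl : M = M' := rowSpace_paddedLift_injective h
  rfl

theorem natCard_setOf_rowSpace_paddedLift {F : Type} [Field F] [Finite F] {k n : ℕ} (hk : 0 < k)
    (C : ∀ j : ℕ, Set (Matrix (Fin k) (Fin (n - k - j * k)) F)) {J : ℕ} (hJ : J * k < n) :
    Nat.card {U : Submodule F (Fin n → F) | ∃ j ≤ J, ∃ M ∈ C j,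
        U = rowSpace F (paddedLift F k n (j * k) M)} = ∑ j ∈ Finset.range (J + 1), Nat.card (C j) := by
  let g : (Σ j : Fin (J + 1), C j) → Submodule F (Fin n → F) :=
    fun p ↦ rowSpace F (paddedLift F k n ((p.1 : ℕ) * k) p.2)
  have hl : Function.Injective fun j : Fin (J + 1) ↦ (j : ℕ) * k :=
    fun j j' h ↦ Fin.ext (Nat.eq_of_mul_eq_mul_right hk h)
  have hln (j : Fin (J + 1)) : (j : ℕ) * k < n :=
    (Nat.mul_le_mul_right k (Nat.lt_succ_iff.1 j.isLt)).trans_lt hJ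
  have hg : Function.Injective g := by
    rintro ⟨j, M, hM⟩ ⟨j', M', hM'⟩ h
    obtain ⟨rfl, hMM'⟩ := Sigma.mk.inj_iff.1 <|
      rowSpace_paddedLift_sigma_injective (F := F) hl hk hln (a₁ := ⟨j, M⟩) (a₂ := ⟨j', M'⟩) h
    obtain rfl := eq_of_heq hMM'
    rfl
  have hrange : {U : Submodule F (Fin n → F) | ∃ j ≤ J, ∃ M ∈ C j,
      U = rowSpace F (paddedLift F k n (j * k) M)} = Set.range g := by
    ext U
    constructor
    · rintro ⟨j, hj, M, hM, rfl⟩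
      exact ⟨⟨⟨j, Nat.lt_succ_of_le hj⟩, ⟨M, hM⟩⟩, rfl⟩
    · rintro ⟨⟨j, M, hM⟩, rfl⟩
      exact ⟨j, Nat.lt_succ_iff.1 j.isLt, M, hM, rfl⟩
  rw [hrange, Nat.card_range_of_injective hg, Nat.card_sigma,
    Fin.sum_univ_eq_sum_range (fun j ↦ Nat.card (C j))]

lemma sub_one_mul_sum_range_pow_sub_mul {R : Type*} [CommRing R] (x : R) {k n t : ℕ}
    (ht : t * k ≤ n) :
    (x ^ k - 1) * ∑ j ∈ Finset.range t, x ^ (n - k - j * k) = x ^ n - x ^ (n - t * k) := by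
  rw [Finset.mul_sum]
  convert Finset.sum_range_sub' (fun j ↦ x ^ (n - j * k)) t using 1
  swap
  · rw [zero_mul, Nat.sub_zero]
  refine Finset.sum_congr rfl fun j hj ↦ ?_
  have hjt : (j + 1) * k ≤ t * k := Nat.mul_le_mul_right k (Finset.mem_range.1 hj)
  rw [add_one_mul] at hjt ⊢
  rw [sub_one_mul, ← pow_add]
  congr 2 <;> omega

theorem multi_component_cardinality_d_eq_k_general
    (q : ℕ) (F : Type) [Field F] [Fintype F] (hq : Fintype.card F = q)
    (k n : ℕ) (hk : 0 < k) (h2k : 2 * k ≤ n)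
    (C : ∀ j : ℕ, Set (Matrix (Fin k) (Fin (n - k - j * k)) F))
    (hC : ∀ j ≤ (n - k) / k,
      if k ≤ n - j * k - k then IsMRD F (C j) k else ∃ M, C j = {M}) :
    (Nat.card {U : Submodule F (Fin n → F) | ∃ j ≤ (n - k) / k, ∃ M ∈ C j,
        U = rowSpace F (paddedLift F k n (j * k) M)} : ℚ)
      = ((q : ℚ) ^ n - (q : ℚ) ^ (n % k + k)) / ((q : ℚ) ^ k - 1) + 1 := by
  have hdiv : (n - k) / k * k + (n - k) % k = n - k := Nat.div_add_mod' (n - k) k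
  have hmod : n % k = (n - k) % k := Nat.mod_eq_sub_mod (by omega)
  have hmod_lt : (n - k) % k < k := Nat.mod_lt _ hk
  generalize (n - k) / k = J at hC hdiv ⊢
  rw [natCard_setOf_rowSpace_paddedLift hk C (J := J) (by omega), Finset.sum_range_succ]
  have hlast : Nat.card (C J) = 1 := by
    have hCJ := hC J le_rfl
    rw [if_neg (by omega)] at hCJ
    obtain ⟨M, hM⟩ := hCJ
    rw [hM, Nat.card_unique]
  have hmrd : ∀ j ∈ Finset.range J, Nat.card (C j) = q ^ (n - k - j * k) := by
    intro j hj
    have hjJ : j < J := Finset.mem_range.1 hj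
    have hjkJ : j * k + k ≤ J * k := Nat.succ_mul j k ▸ Nat.mul_le_mul_right k hjJ
    have hCj := hC j (by omega)
    rw [if_pos (by omega)] at hCj
    rw [hCj.natCard_eq_of_le (by omega), hq]
  have hqk : (1 : ℚ) < (q : ℚ) ^ k :=
    one_lt_pow₀ (by exact_mod_cast hq ▸ Fintype.one_lt_card) hk.ne'
  have hgeom := sub_one_mul_sum_range_pow_sub_mul (q : ℚ) (show J * k ≤ n by omega)
  rw [show n - J * k = n % k + k by omega] at hgeom
  rw [Finset.sum_congr rfl hmrd, hlast]
  push_cast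
  rw [← hgeom, mul_div_cancel_left₀ _ (by linarith)]

/-- **Cardinality of multi-component lifted MRD codes in the case `d = k`.**
With `n ≡ r (mod k)`, `0 ≤ r < k`, the multi-component code built from MRD
codes of minimum rank distance `k` has cardinality
`(q^n − q^{r+k})/(q^k − 1) + 1`. -/
theorem multi_component_cardinality_d_eq_k
    (q : ℕ) (F : Type) [Field F] [Fintype F] (hq : Fintype.card F = q)
    (k n : ℕ) (hk : 0 < k) (hn : 0 < n) (h2k : 2 * k ≤ n)
    (C : ∀ j : ℕ, Set (Matrix (Fin k) (Fin (n - k - j * k)) F))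
    (hC : ∀ j ≤ (n - k) / k,
      if k ≤ n - j * k - k then IsMRD F (C j) k else ∃ M, C j = {M}) :
    (Nat.card {U : Submodule F (Fin n → F) | ∃ j ≤ (n - k) / k, ∃ M ∈ C j,
        U = rowSpace F (paddedLift F k n (j * k) M)} : ℚ)
      = ((q : ℚ) ^ n - (q : ℚ) ^ (n % k + k)) / ((q : ℚ) ^ k - 1) + 1 :=
  multi_component_cardinality_d_eq_k_general q F hq k n hk h2k C hC
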